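/- Let A be a finite alphabet with |A| ≥ 2, let k ≥ 1, and let n ≥ k. Then λ_{A,σ_k}(n), the largest cardinality of a finite set X of words of length at most n over A over which a σ_k-Gray cycle exists, is given by: λ_{A,σ_k}(n) = |A|^n if |A| ≥ 3 and n ≥ k; λ_{A,σ_k}(n) = 2 if |A| = 2 and n = k; λ_{A,σ_k}(n) = 2^n if |A| = 2, n ≥ k+1 and k is odd; and λ_{A,σ_k}(n) = 2^{n−1} if |A| = 2, n ≥ k+1 and k is even. -/

import Mathlib

/-- Hamming distance between two words (lists) of the same length:
the number of positions in which they differ. -/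
def hammingL {α : Type*} [DecidableEq α] (w w' : List α) : ℕ :=
  ((w.zip w').filter fun q => decide (q.1 ≠ q.2)).length

/-- `w` (restricted to indices `< N`, where `N = |X|`) is a `σ_k`-Gray cycle over the
finite set of words `X`: the terms lie in `X`, enumerate all of `X`, are pairwise
distinct, two consecutive terms have the same length and Hamming distance exactly `k`,
and so do the first and the last term. -/
def IsSigmaGrayCycle {α : Type*} [DecidableEq α] (k N : ℕ) (w : ℕ → List α)
    (X : Finset (List α)) : Prop :=
  N = X.card ∧
  (∀ i, i < N → w i ∈ X) ∧
  (∀ x ∈ X, ∃ i, i < N ∧ w i = x) ∧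
  (∀ i, i < N → ∀ j, j < N → w i = w j → i = j) ∧
  (∀ i, 1 ≤ i → i < N →
    (w (i - 1)).length = (w i).length ∧ hammingL (w (i - 1)) (w i) = k) ∧
  (0 < N → (w (N - 1)).length = (w 0).length ∧ hammingL (w (N - 1)) (w 0) = k)

/-- The set of cardinalities of finite sets `X` of words of length at most `n` over the
alphabet `A` over which some `σ_k`-Gray cycle exists. The largest element of this set
is `λ_{A,σ_k}(n)`. -/
def grayCycleSizes (A : Type*) [DecidableEq A] (k n : ℕ) : Set ℕ :=
  {m : ℕ | ∃ (X : Finset (List A)) (w : ℕ → List A),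
    (∀ x ∈ X, x.length ≤ n) ∧ IsSigmaGrayCycle k X.card w X ∧ m = X.card}

/-!
Lower bounds. The base-`q` digit differences of `t` form a cyclic Gray code of `(ZMod q)^d` in
which every step `t ↦ t + 1` adds a unit vector `e_J`. Composing it with an injective additive map
`M` all of whose columns `M e_J` have Hamming weight `k` gives a `σ_k`-Gray cycle through `q^d`
words. Such maps exist with `d = n` when `q ≥ 3`, or `q = 2` and `k` is odd; with `d = n - 1`
when `q = 2` and `k` is even (append the parity of the word); and with `d = 1` when `n = k`.

Upper bounds. The words of a Gray cycle share a length `L` with `k ≤ L ≤ n`, whence `|A|^n`.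
Over two letters a step of even weight preserves the parity of a word, so the last letter is
determined by the others, whence `2^(n-1)`; and if `L = k`, every step complements the word, so
there are at most two words.
-/

open Finset

section Hamming
variable {α : Type*} [DecidableEq α]

theorem hammingL_cons (a b : α) (u v : List α) :
    hammingL (a :: u) (b :: v) = hammingL u v + if a = b then 0 else 1 := by
  by_cases h : a = b <;> simp [hammingL, h]

theorem hammingL_le_length (u v : List α) : hammingL u v ≤ u.length :=
  (List.length_filter_le _ _).trans (by simp)

theorem hammingL_ofFn {n : ℕ} (f g : Fin n → α) :
    hammingL (List.ofFn f) (List.ofFn g) = hammingDist f g := by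
  induction n with
  | zero => rfl
  | succ n ih =>
    rw [List.ofFn_succ, List.ofFn_succ, hammingL_cons, ih, hammingDist, hammingDist,
      Fin.card_filter_univ_succ]
    by_cases h : f 0 = g 0 <;> simp [h]

end Hamming

/-- The base-`q` digit differences `⌊t / q ^ j⌋ - ⌊t / q ^ (j + 1)⌋ mod q`, the top one without its
second term so that the code only depends on `t mod q ^ m`. -/
def grayCode (q m t : ℕ) : Fin m → ZMod q := fun j =>
  ((t / q ^ (j : ℕ) : ℕ) : ZMod q) -
    if (j : ℕ) + 1 < m then ((t / q ^ ((j : ℕ) + 1) : ℕ) : ZMod q) else 0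

section GrayCode
variable {q m : ℕ}

theorem natCast_mod_pow_div_pow {j : ℕ} (hj : j < m) (t : ℕ) :
    ((t % q ^ m / q ^ j : ℕ) : ZMod q) = ((t / q ^ j : ℕ) : ZMod q) := by
  rw [show m = j + (m - j) by omega, pow_add, Nat.mod_mul_right_div_self, ← ZMod.natCast_mod,
    Nat.mod_mod_of_dvd _ (dvd_pow_self q (by omega)), ZMod.natCast_mod]

theorem grayCode_mod_pow (t : ℕ) : grayCode q m (t % q ^ m) = grayCode q m t := by
  funext j
  simp only [grayCode]
  rw [natCast_mod_pow_div_pow j.2]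
  split_ifs with h
  · rw [natCast_mod_pow_div_pow h]
  · rfl

theorem natCast_succ_div_pow (t j : ℕ) :
    (((t + 1) / q ^ j : ℕ) : ZMod q) =
      ((t / q ^ j : ℕ) : ZMod q) + if q ^ j ∣ t + 1 then 1 else 0 := by
  rw [Nat.succ_div]
  split_ifs <;> simp

/-- Passing from `t` to `t + 1` increments `⌊t / q ^ j⌋` exactly for the `j` with `q ^ j ∣ t + 1`,
so only the digit difference at the largest such `j` (capped at `m - 1`) changes. -/
theorem exists_grayCode_succ (hm : 1 ≤ m) (t : ℕ) :
    ∃ J : Fin m, grayCode q m (t + 1) = grayCode q m t + Pi.single J 1 := by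
  set J := Nat.findGreatest (fun j => q ^ j ∣ t + 1) (m - 1)
  have hdvd : ∀ j, j ≤ J → q ^ j ∣ t + 1 := fun j hj =>
    (pow_dvd_pow q hj).trans (Nat.findGreatest_spec (P := fun j => q ^ j ∣ t + 1)
      (Nat.zero_le _) (by simp))
  have hndvd : ∀ j, J < j → j ≤ m - 1 → ¬ q ^ j ∣ t + 1 := fun j h1 h2 =>
    Nat.findGreatest_is_greatest (P := fun j => q ^ j ∣ t + 1) h1 h2
  have hJm : J ≤ m - 1 := Nat.findGreatest_le _
  clear_value J
  refine ⟨⟨J, by omega⟩, funext fun j => ?_⟩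
  simp only [grayCode, Pi.add_apply, Pi.single_apply, Fin.ext_iff, natCast_succ_div_pow]
  rcases lt_trichotomy (j : ℕ) J with h | rfl | h
  · simp [show (j : ℕ) + 1 < m by omega, hdvd _ h.le, hdvd _ h, h.ne]
  · by_cases h' : (j : ℕ) + 1 < m
    · simp [h', hdvd, hndvd _ (Nat.lt_succ_self _) (by omega)]
      ring
    · simp [h', hdvd]
  · by_cases h' : (j : ℕ) + 1 < m
    · simp [h', hndvd _ h (by omega), hndvd _ (Nat.lt_succ_of_lt h) (by omega), h.ne']
    · simp [h', hndvd _ h (by omega), h.ne']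

theorem natCast_div_pow_eq_of_grayCode_eq {s t : ℕ} (h : grayCode q m s = grayCode q m t) :
    ∀ j < m, ((s / q ^ j : ℕ) : ZMod q) = ((t / q ^ j : ℕ) : ZMod q) := by
  suffices ∀ d j, j + d + 1 = m → ((s / q ^ j : ℕ) : ZMod q) = ((t / q ^ j : ℕ) : ZMod q) from
    fun j hj => this (m - j - 1) j (by omega)
  intro d
  induction d with
  | zero =>
    intro j hj
    simpa [grayCode, show ¬ j + 1 < m by omega] using congrFun h ⟨j, by omega⟩
  | succ d ih =>
    intro j hj
    have hj' := congrFun h ⟨j, by omega⟩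
    simp only [grayCode, if_pos (show j + 1 < m by omega), ih (j + 1) (by omega)] at hj'
    exact sub_left_injective hj'

theorem grayCode_injOn {s t : ℕ} (hs : s < q ^ m) (ht : t < q ^ m)
    (h : grayCode q m s = grayCode q m t) : s = t := by
  have hdigits : finFunctionFinEquiv.symm (⟨s, hs⟩ : Fin (q ^ m)) =
      finFunctionFinEquiv.symm (⟨t, ht⟩ : Fin (q ^ m)) := by
    funext j
    ext
    simp only [finFunctionFinEquiv_symm_apply_val]
    exact (ZMod.natCast_eq_natCast_iff' _ _ _).1 (natCast_div_pow_eq_of_grayCode_eq h j j.2)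
  simpa using finFunctionFinEquiv.symm.injective hdigits

end GrayCode

section Construction
variable {A : Type*} [DecidableEq A] {k n : ℕ}

theorem mem_grayCycleSizes_of_cycle (N : ℕ) (w : ℕ → List A)
    (hlen : ∀ t < N, (w t).length ≤ n)
    (hinj : ∀ s < N, ∀ t < N, w s = w t → s = t)
    (hstep : ∀ t < N, (w t).length = (w ((t + 1) % N)).length ∧
      hammingL (w t) (w ((t + 1) % N)) = k) :
    N ∈ grayCycleSizes A k n := by
  have hcard : ((range N).image w).card = N := by
    rw [card_image_of_injOn fun s hs t ht => hinj s (by simpa using hs) t (by simpa using ht),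
      card_range]
  refine ⟨(range N).image w, w, ?_, ?_, hcard.symm⟩
  · simpa using hlen
  rw [IsSigmaGrayCycle, hcard]
  refine ⟨rfl, fun i hi => mem_image_of_mem w (mem_range.2 hi), by simp,
    hinj, fun i h1 hi => ?_, fun hN => ?_⟩
  · simpa [Nat.sub_add_cancel h1, Nat.mod_eq_of_lt hi] using hstep (i - 1) (by omega)
  · simpa [Nat.sub_add_cancel hN] using hstep (N - 1) (by omega)

theorem pow_mem_grayCycleSizes {q d L : ℕ} (e : ZMod q ≃ A) (hd : 1 ≤ d) (hL : L ≤ n)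
    (M : (Fin d → ZMod q) →+ (Fin L → ZMod q)) (hM : Function.Injective M)
    (hcol : ∀ J, hammingNorm (M (Pi.single J 1)) = k) :
    q ^ d ∈ grayCycleSizes A k n := by
  refine mem_grayCycleSizes_of_cycle (q ^ d)
    (fun t => List.ofFn fun i => e (M (grayCode q d t) i)) (by simpa using fun _ _ => hL)
    (fun s hs t ht h => grayCode_injOn hs ht
      (hM (funext fun i => e.injective (congrFun (List.ofFn_injective h) i))))
    fun t _ => ⟨by simp, ?_⟩
  obtain ⟨J, hJ⟩ := exists_grayCode_succ (q := q) hd t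
  rw [hammingL_ofFn, hammingDist_comp (fun _ => e) (fun _ => e.injective), grayCode_mod_pow, hJ,
    map_add, hammingDist_eq_hammingNorm, neg_add_cancel_left, hcol]

end Construction

theorem hammingNorm_eq_card_range_filter {M : Type*} [Zero M] [DecidableEq M] {n : ℕ}
    (v : Fin n → M) (P : ℕ → Prop) [DecidablePred P] (h : ∀ r : Fin n, v r ≠ 0 ↔ P r) :
    hammingNorm v = #{r ∈ range n | P r} := by
  rw [hammingNorm, ← card_map Fin.valEmbedding]
  congr 1
  ext x
  simp only [mem_map, mem_filter, mem_univ, true_and, Fin.valEmbedding_apply, mem_range, h]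
  exact ⟨fun ⟨i, hi, hix⟩ => hix ▸ ⟨i.2, hi⟩, fun ⟨hx, h⟩ => ⟨⟨x, hx⟩, h, rfl⟩⟩

theorem card_range_filter_lt {n k : ℕ} (hkn : k ≤ n) : #{r ∈ range n | r < k} = k := by
  rw [show {r ∈ range n | r < k} = range k by ext; simp; omega, card_range]

theorem card_range_filter_add_one_lt_or_eq {n k J : ℕ} (hk : 1 ≤ k) (hJ : k ≤ J + 1)
    (hJn : J < n) : #{r ∈ range n | r + 1 < k ∨ r = J} = k := by
  rw [show {r ∈ range n | r + 1 < k ∨ r = J} = insert J (range (k - 1)) by ext; simp; omega,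
    card_insert_of_notMem (by simp; omega), card_range]
  omega

theorem card_range_filter_le_ne {n k J : ℕ} (hJ : J ≤ k) (hkn : k < n) :
    #{r ∈ range n | r ≤ k ∧ r ≠ J} = k := by
  rw [show {r ∈ range n | r ≤ k ∧ r ≠ J} = (range (k + 1)).erase J by ext; simp; omega,
    card_erase_of_mem (by simp; omega), card_range]
  rfl

section Maps
variable (R : Type*) [Ring R] (k : ℕ)

/-- `x ↦ x + (∑ x) • 1_{[0, k-1)} + (∑_{j < k-1} x_j) • e_{k-1}`. The column of `e_J` is supported
on `[0, k)` if `J < k - 1` (with entries `2` and `1`), and on `[0, k-1) ∪ {J}` otherwise. -/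
def mixMap (n : ℕ) : (Fin n → R) →+ (Fin n → R) where
  toFun x r := x r + (if (r : ℕ) + 1 < k then ∑ j, x j else 0) +
    if (r : ℕ) + 1 = k then ∑ j ∈ univ.filter fun j : Fin n => (j : ℕ) + 1 < k, x j else 0
  map_zero' := by ext; simp
  map_add' x y := by
    ext r
    simp only [Pi.add_apply, sum_add_distrib]
    split_ifs <;> abel

/-- The column of `e_J` is supported on `[0, k] \ {J}` if `J ≤ k`, and on `[0, k-1) ∪ {J}`
otherwise. A vector in the kernel vanishes above `k` and is constant, say `s`, on `[0, k]`, with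
`s = (k + 1) • s`. -/
def reflectMap (n : ℕ) : (Fin n → R) →+ (Fin n → R) where
  toFun x r :=
    if (r : ℕ) + 1 < k then ∑ j, x j - x r
    else if (r : ℕ) ≤ k then ∑ j ∈ univ.filter fun j : Fin n => (j : ℕ) ≤ k, x j - x r
    else x r
  map_zero' := by ext; simp
  map_add' x y := by
    ext r
    simp only [Pi.add_apply, sum_add_distrib]
    split_ifs <;> abel

def diagMap (L : ℕ) : (Fin 1 → R) →+ (Fin L → R) where
  toFun x _ := x 0
  map_zero' := rfl
  map_add' _ _ := rfl

variable {R k}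

theorem hammingNorm_mixMap_single [DecidableEq R] [Nontrivial R] (h2 : (2 : R) ≠ 0) {n : ℕ}
    (hk : 1 ≤ k) (hkn : k ≤ n) (J : Fin n) : hammingNorm (mixMap R k n (Pi.single J 1)) = k := by
  have h2' : (1 : R) + 1 ≠ 0 := by rwa [one_add_one_eq_two]
  by_cases hJ : (J : ℕ) + 1 < k
  · rw [hammingNorm_eq_card_range_filter _ (· < k), card_range_filter_lt hkn]
    intro r
    simp only [mixMap, AddMonoidHom.coe_mk, ZeroHom.coe_mk, Pi.single_apply, sum_ite_eq',
      mem_univ, mem_filter, hJ, if_true, true_and]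
    split_ifs <;> simp_all [← Fin.val_inj] <;> omega
  · rw [hammingNorm_eq_card_range_filter _ (fun r => r + 1 < k ∨ r = J),
      card_range_filter_add_one_lt_or_eq hk (by omega) J.2]
    intro r
    simp only [mixMap, AddMonoidHom.coe_mk, ZeroHom.coe_mk, Pi.single_apply, sum_ite_eq',
      mem_univ, mem_filter, hJ, if_true, if_false, true_and]
    split_ifs <;> simp_all [← Fin.val_inj]

theorem mixMap_injective {n : ℕ} (hk : 1 ≤ k) (hkn : k ≤ n) :
    Function.Injective (mixMap R k n) := by
  refine (injective_iff_map_eq_zero _).2 fun x hx => ?_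
  set τ := ∑ j ∈ univ.filter fun j : Fin n => (j : ℕ) + 1 < k, x j
  have hrow : ∀ r : Fin n, x r + (if (r : ℕ) + 1 < k then ∑ j, x j else 0) +
      (if (r : ℕ) + 1 = k then τ else 0) = 0 := fun r => congrFun hx r
  have htop : ∀ r : Fin n, k ≤ r → x r = 0 := fun r hr => by
    simpa [show ¬ (r : ℕ) + 1 < k by omega, show (r : ℕ) + 1 ≠ k by omega] using hrow r
  set c : Fin n := ⟨k - 1, by omega⟩
  have hc : x c = -τ := by
    simpa [c, show k - 1 + 1 = k by omega, add_eq_zero_iff_eq_neg] using hrow c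
  have hsum : ∑ j, x j = 0 := by
    have hrest : ∑ j ∈ univ.filter (fun j : Fin n => ¬ (j : ℕ) + 1 < k), x j = x c :=
      sum_eq_single_of_mem c (by simp [c]; omega) fun j hj hjc => htop j (by
        rw [Ne, ← Fin.val_inj] at hjc
        simp only [mem_filter, mem_univ, true_and, c] at hj hjc
        omega)
    rw [← sum_filter_add_sum_filter_not univ fun j : Fin n => (j : ℕ) + 1 < k, hrest, hc,
      add_neg_cancel]
  have hlow : ∀ r : Fin n, (r : ℕ) + 1 < k → x r = 0 := fun r hr => by
    simpa [hr, hsum, show (r : ℕ) + 1 ≠ k by omega] using hrow r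
  have hτ : τ = 0 := sum_eq_zero fun j hj => hlow j (by simpa using hj)
  funext r
  rcases lt_trichotomy ((r : ℕ) + 1) k with h | h | h
  · exact hlow r h
  · rw [show r = c by ext; simp [c]; omega, hc, hτ, neg_zero]; rfl
  · exact htop r (by omega)

theorem hammingNorm_reflectMap_single [DecidableEq R] [Nontrivial R] {n : ℕ} (hk : 1 ≤ k)
    (hkn : k < n) (J : Fin n) : hammingNorm (reflectMap R k n (Pi.single J 1)) = k := by
  by_cases hJ : (J : ℕ) ≤ k
  · rw [hammingNorm_eq_card_range_filter _ (fun r => r ≤ k ∧ r ≠ J),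
      card_range_filter_le_ne hJ hkn]
    intro r
    simp only [reflectMap, AddMonoidHom.coe_mk, ZeroHom.coe_mk, Pi.single_apply, sum_ite_eq',
      mem_univ, mem_filter, hJ, if_true, true_and]
    split_ifs <;> simp_all [← Fin.val_inj]
    omega
  · rw [hammingNorm_eq_card_range_filter _ (fun r => r + 1 < k ∨ r = J),
      card_range_filter_add_one_lt_or_eq hk (by omega) J.2]
    intro r
    simp only [reflectMap, AddMonoidHom.coe_mk, ZeroHom.coe_mk, Pi.single_apply, sum_ite_eq',
      mem_univ, mem_filter, hJ, if_true, if_false, true_and]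
    split_ifs <;> simp_all [← Fin.val_inj]
    omega

theorem reflectMap_injective {n : ℕ} (hk : IsUnit (k : R)) (hkn : k < n) :
    Function.Injective (reflectMap R k n) := by
  refine (injective_iff_map_eq_zero _).2 fun x hx => ?_
  set S := ∑ j ∈ univ.filter fun j : Fin n => (j : ℕ) ≤ k, x j
  have hrow : ∀ r : Fin n, (if (r : ℕ) + 1 < k then ∑ j, x j - x r
      else if (r : ℕ) ≤ k then S - x r else x r) = 0 := fun r => congrFun hx r
  have htop : ∀ r : Fin n, k < r → x r = 0 := fun r hr => by
    simpa [show ¬ (r : ℕ) + 1 < k by omega, show ¬ (r : ℕ) ≤ k by omega] using hrow r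
  have hsum : ∑ j, x j = S := by
    have hrest : ∑ j ∈ univ.filter (fun j : Fin n => ¬ (j : ℕ) ≤ k), x j = 0 :=
      sum_eq_zero fun j hj => htop j (by simp at hj; omega)
    rw [← sum_filter_add_sum_filter_not univ fun j : Fin n => (j : ℕ) ≤ k, hrest, add_zero]
  have hlow : ∀ r : Fin n, (r : ℕ) ≤ k → x r = S := fun r hr => by
    have := hrow r
    rw [hsum] at this
    split_ifs at this <;> exact (sub_eq_zero.1 this).symm
  have hS : S = 0 := by
    have hcard : #(univ.filter fun j : Fin n => (j : ℕ) ≤ k) = k + 1 := by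
      simp_rw [← Nat.lt_succ_iff, Fin.card_filter_val_lt]
      omega
    have h : S = (k + 1) • S := by
      conv_lhs => rw [show S = ∑ j ∈ univ.filter fun j : Fin n => (j : ℕ) ≤ k, S from
        sum_congr rfl fun j hj => hlow j (by simpa using hj)]
      rw [sum_const, hcard]
    rw [succ_nsmul, eq_comm, add_eq_right, nsmul_eq_mul] at h
    exact (hk.mul_right_eq_zero).1 h
  funext r
  by_cases hr : (r : ℕ) ≤ k
  · exact (hlow r hr).trans hS
  · exact htop r (by omega)

def consSum {d L : ℕ} (M : (Fin d → R) →+ (Fin L → R)) : (Fin d → R) →+ (Fin (L + 1) → R) where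
  toFun x := Fin.cons (∑ j, x j) (M x)
  map_zero' := by ext i; cases i using Fin.cases <;> simp
  map_add' x y := by ext i; cases i using Fin.cases <;> simp [sum_add_distrib]

theorem hammingNorm_consSum_single [DecidableEq R] [Nontrivial R] {d L : ℕ}
    (M : (Fin d → R) →+ (Fin L → R)) (J : Fin d) :
    hammingNorm (consSum M (Pi.single J 1)) = hammingNorm (M (Pi.single J 1)) + 1 := by
  simp [hammingNorm, consSum, Fin.card_filter_univ_succ]

theorem consSum_injective {d L : ℕ} {M : (Fin d → R) →+ (Fin L → R)}
    (hM : Function.Injective M) : Function.Injective (consSum M) :=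
  fun _ _ h => hM (congrArg Fin.tail h)

theorem hammingNorm_diagMap_single [DecidableEq R] [Nontrivial R] (L : ℕ) (J : Fin 1) :
    hammingNorm (diagMap R L (Pi.single J 1)) = L := by
  simp [hammingNorm, diagMap, Subsingleton.elim J 0]

theorem diagMap_injective (L : ℕ) (hL : 1 ≤ L) : Function.Injective (diagMap R L) :=
  fun x y h => funext fun i => by
    simpa [diagMap, Subsingleton.elim i 0] using congrFun h ⟨0, hL⟩

end Maps

section LowerBounds
variable {A : Type*} [Fintype A] [DecidableEq A] {k n : ℕ}

theorem card_pow_mem_grayCycleSizes (hA : 3 ≤ Fintype.card A) (hk : 1 ≤ k) (hkn : k ≤ n) :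
    Fintype.card A ^ n ∈ grayCycleSizes A k n := by
  set q := Fintype.card A
  have : Fact (1 < q) := ⟨by omega⟩
  have h2 : (2 : ZMod q) ≠ 0 := by
    simpa using (ZMod.natCast_eq_zero_iff 2 q).not.2 fun h => by
      have := Nat.le_of_dvd two_pos h; omega
  exact pow_mem_grayCycleSizes (Fintype.equivOfCardEq (by simp [q])) (by omega) le_rfl
    (mixMap _ k n) (mixMap_injective hk hkn) (hammingNorm_mixMap_single h2 hk hkn)

theorem two_pow_mem_grayCycleSizes (hA : Fintype.card A = 2) (hk : 1 ≤ k) (hko : Odd k)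
    (hkn : k < n) : 2 ^ n ∈ grayCycleSizes A k n :=
  pow_mem_grayCycleSizes (Fintype.equivOfCardEq (by simp [hA])) (by omega) le_rfl
    (reflectMap _ k n) (reflectMap_injective (by simp [hko.natCast_zmod_two]) hkn)
    (hammingNorm_reflectMap_single hk hkn)

theorem two_pow_pred_mem_grayCycleSizes (hA : Fintype.card A = 2) (hk : 1 ≤ k) (hke : Even k)
    (hkn : k < n) : 2 ^ (n - 1) ∈ grayCycleSizes A k n := by
  obtain ⟨c, rfl⟩ := hke
  have hko : Odd (c + c - 1) := ⟨c - 1, by omega⟩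
  refine pow_mem_grayCycleSizes (d := n - 1) (L := n - 1 + 1)
    (Fintype.equivOfCardEq (by simp [hA])) (by omega) (by omega)
    (consSum (reflectMap _ (c + c - 1) (n - 1)))
    (consSum_injective (reflectMap_injective (by simp [hko.natCast_zmod_two]) (by omega)))
    fun J => ?_
  rw [hammingNorm_consSum_single,
    hammingNorm_reflectMap_single (k := c + c - 1) (by omega) (by omega)]
  omega

theorem two_mem_grayCycleSizes (hA : Fintype.card A = 2) (hk : 1 ≤ k) (hkn : k ≤ n) :
    2 ∈ grayCycleSizes A k n :=
  pow_one 2 ▸ pow_mem_grayCycleSizes (Fintype.equivOfCardEq (by simp [hA])) le_rfl hkn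
    (diagMap _ k) (diagMap_injective k hk) (hammingNorm_diagMap_single k)

end LowerBounds

section WordCounting
variable {A : Type*} [Fintype A] [DecidableEq A]

theorem card_le_pow_of_forall_length_eq {L : ℕ} (X : Finset (List A))
    (hX : ∀ x ∈ X, x.length = L) : X.card ≤ Fintype.card A ^ L :=
  calc X.card ≤ (univ.image (List.Vector.toList : List.Vector A L → List A)).card :=
        card_le_card fun x hx => mem_image.2 ⟨⟨x, hX x hx⟩, mem_univ _, rfl⟩
    _ ≤ Fintype.card (List.Vector A L) := card_image_le
    _ = Fintype.card A ^ L := card_vector L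

/-- The last letter of a word of `X` is determined by the others, as `φ` is injective and the
`φ`-sum is fixed. -/
theorem card_le_pow_pred_of_sum_map_eq {G : Type*} [AddCommGroup G] {φ : A → G}
    (hφ : Function.Injective φ) {L : ℕ} {c : G} (X : Finset (List A))
    (hX : ∀ x ∈ X, x.length = L ∧ (x.map φ).sum = c) : X.card ≤ Fintype.card A ^ (L - 1) := by
  have hinj : Set.InjOn List.dropLast (X : Set (List A)) := by
    intro x hx y hy hxy
    have hlen := (hX x hx).1.trans (hX y hy).1.symm
    have hsum := (hX x hx).2.trans (hX y hy).2.symm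
    rcases x.eq_nil_or_concat' with rfl | ⟨x', a, rfl⟩ <;>
      rcases y.eq_nil_or_concat' with rfl | ⟨y', b, rfl⟩
    · rfl
    · simp at hlen
    · simp at hlen
    · simp only [List.dropLast_concat] at hxy
      subst hxy
      simp only [List.map_append, List.sum_append, List.map_cons, List.map_nil, List.sum_cons,
        List.sum_nil, add_zero, add_right_inj] at hsum
      rw [hφ hsum]
  rw [← card_image_of_injOn hinj]
  refine card_le_pow_of_forall_length_eq _ fun x hx => ?_
  obtain ⟨y, hy, rfl⟩ := mem_image.1 hx
  rw [List.length_dropLast, (hX y hy).1]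

end WordCounting

section Parity
variable {A : Type*} [DecidableEq A]

theorem eq_of_ne_of_ne_of_card_eq_two [Fintype A] {a b c : A} (hA : Fintype.card A = 2)
    (hab : a ≠ b) (hcb : c ≠ b) : a = c := by
  by_contra hac
  have := card_le_univ ({a, b, c} : Finset A)
  rw [card_insert_of_notMem (by simp [hab, hac]), card_pair hcb.symm] at this
  omega

theorem eq_of_hammingL_eq_length [Fintype A] (hA : Fintype.card A = 2) {u v u' : List A}
    (hlen : u.length = v.length) (hlen' : v.length = u'.length)
    (huv : hammingL u v = u.length) (hvu : hammingL v u' = v.length) : u = u' := by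
  induction u generalizing v u' with
  | nil => cases v <;> cases u' <;> simp_all
  | cons a u ih =>
    obtain ⟨b, v, rfl⟩ := List.exists_cons_of_length_eq_add_one hlen.symm
    obtain ⟨c, u', rfl⟩ := List.exists_cons_of_length_eq_add_one hlen'.symm
    have h1 := hammingL_le_length u v
    have h2 := hammingL_le_length v u'
    simp only [hammingL_cons, List.length_cons] at huv hvu hlen hlen'
    by_cases hab : a = b
    · simp [hab] at huv; omega
    by_cases hbc : b = c
    · simp [hbc] at hvu; omega
    simp only [hab, hbc, if_false] at huv hvu
    rw [eq_of_ne_of_ne_of_card_eq_two hA hab (Ne.symm hbc),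
      ih (v := v) (u' := u') (by omega) (by omega) (by omega) (by omega)]

theorem sum_map_sub_sum_map {φ : A → ZMod 2} (hφ : Function.Injective φ) {u v : List A}
    (h : u.length = v.length) : (u.map φ).sum - (v.map φ).sum = hammingL u v := by
  induction u generalizing v with
  | nil => cases v <;> simp_all [hammingL]
  | cons a u ih =>
    obtain ⟨b, v, rfl⟩ := List.exists_cons_of_length_eq_add_one h.symm
    have key : ∀ x y : ZMod 2, x ≠ y → x - y = 1 := by decide
    rw [hammingL_cons, Nat.cast_add, ← ih (by simpa using h)]
    simp only [List.map_cons, List.sum_cons]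
    split_ifs with hab
    · subst hab
      push_cast
      ring
    · rw [Nat.cast_one, ← key _ _ (hφ.ne hab)]
      ring

end Parity

namespace IsSigmaGrayCycle
variable {A : Type*} [DecidableEq A] {k N : ℕ} {w : ℕ → List A} {X : Finset (List A)}

theorem length_eq_of_lt (hc : IsSigmaGrayCycle k N w X) : ∀ i < N, (w i).length = (w 0).length
  | 0, _ => rfl
  | i + 1, hi => by
    rw [← (hc.2.2.2.2.1 (i + 1) le_add_self hi).1, Nat.add_sub_cancel]
    exact hc.length_eq_of_lt i (by omega)

theorem length_eq (hc : IsSigmaGrayCycle k N w X) : ∀ x ∈ X, x.length = (w 0).length := by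
  intro x hx
  obtain ⟨i, hi, rfl⟩ := hc.2.2.1 x hx
  exact hc.length_eq_of_lt i hi

theorem le_length (hc : IsSigmaGrayCycle k N w X) (hN : 0 < N) : k ≤ (w 0).length := by
  obtain ⟨hlen, hdist⟩ := hc.2.2.2.2.2 hN
  exact hdist ▸ hlen ▸ hammingL_le_length _ _

theorem sum_map_eq_of_even (hc : IsSigmaGrayCycle k N w X) {φ : A → ZMod 2}
    (hφ : Function.Injective φ) (hk : Even k) : ∀ x ∈ X, (x.map φ).sum = ((w 0).map φ).sum := by
  suffices h : ∀ i < N, ((w i).map φ).sum = ((w 0).map φ).sum by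
    intro x hx
    obtain ⟨i, hi, rfl⟩ := hc.2.2.1 x hx
    exact h i hi
  intro i
  induction i with
  | zero => exact fun _ => rfl
  | succ i ih =>
    intro hi
    obtain ⟨hlen, hdist⟩ := hc.2.2.2.2.1 (i + 1) le_add_self hi
    rw [Nat.add_sub_cancel] at hlen hdist
    have := sum_map_sub_sum_map hφ hlen
    rw [hdist, hk.natCast_zmod_two, sub_eq_zero] at this
    rw [← this, ih (by omega)]

theorem card_le_two [Fintype A] (hc : IsSigmaGrayCycle k N w X) (hA : Fintype.card A = 2)
    (hL : (w 0).length ≤ k) : N ≤ 2 := by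
  by_contra! hN
  have hL0 : (w 0).length = k := le_antisymm hL (hc.le_length (by omega))
  obtain ⟨hlen₁, hdist₁⟩ := hc.2.2.2.2.1 1 le_rfl (by omega)
  obtain ⟨hlen₂, hdist₂⟩ := hc.2.2.2.2.1 2 (by omega) (by omega)
  norm_num at hlen₁ hdist₁ hlen₂ hdist₂
  have h02 : w 0 = w 2 := eq_of_hammingL_eq_length hA hlen₁ hlen₂ (hdist₁.trans hL0.symm)
    (hdist₂.trans (hlen₁ ▸ hL0).symm)
  exact absurd (hc.2.2.2.1 0 (by omega) 2 (by omega) h02) (by omega)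

end IsSigmaGrayCycle

section UpperBounds
variable {A : Type*} [Fintype A] [DecidableEq A] {k n m : ℕ}

theorem le_card_pow_of_mem_grayCycleSizes [Nonempty A] (hm : m ∈ grayCycleSizes A k n) :
    m ≤ Fintype.card A ^ n := by
  obtain ⟨X, w, hlen, hc, rfl⟩ := hm
  rcases X.eq_empty_or_nonempty with rfl | ⟨x, hx⟩
  · simp
  calc X.card ≤ Fintype.card A ^ (w 0).length := card_le_pow_of_forall_length_eq X hc.length_eq
    _ ≤ Fintype.card A ^ n :=
      Nat.pow_le_pow_right Fintype.card_pos (hc.length_eq x hx ▸ hlen x hx)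

theorem le_two_of_mem_grayCycleSizes (hA : Fintype.card A = 2)
    (hm : m ∈ grayCycleSizes A k k) : m ≤ 2 := by
  obtain ⟨X, w, hlen, hc, rfl⟩ := hm
  rcases X.eq_empty_or_nonempty with rfl | hX
  · simp
  exact hc.1 ▸ hc.card_le_two hA (hlen _ (hc.2.1 0 (hc.1 ▸ hX.card_pos)))

theorem le_two_pow_pred_of_mem_grayCycleSizes (hA : Fintype.card A = 2) (hk : 1 ≤ k)
    (hke : Even k) (hm : m ∈ grayCycleSizes A k n) : m ≤ 2 ^ (n - 1) := by
  obtain ⟨X, w, hlen, hc, rfl⟩ := hm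
  rcases X.eq_empty_or_nonempty with rfl | hX
  · simp
  have hw0 : w 0 ∈ X := hc.2.1 0 (hc.1 ▸ hX.card_pos)
  have hkL := hc.le_length (hc.1 ▸ hX.card_pos)
  have e : A ≃ ZMod 2 := Fintype.equivOfCardEq (by simp [hA])
  calc X.card ≤ Fintype.card A ^ ((w 0).length - 1) :=
        card_le_pow_pred_of_sum_map_eq e.injective X fun x hx =>
          ⟨hc.length_eq x hx, hc.sum_map_eq_of_even e.injective hke x hx⟩
    _ ≤ 2 ^ (n - 1) := by
      rw [hA]
      exact Nat.pow_le_pow_right two_pos (by have := hlen _ hw0; omega)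

end UpperBounds

theorem statement18_general (A : Type*) [Fintype A] [DecidableEq A]
    (k n : ℕ) (hk : 1 ≤ k) (hn : k ≤ n) :
    (3 ≤ Fintype.card A →
      IsGreatest (grayCycleSizes A k n) (Fintype.card A ^ n)) ∧
    (Fintype.card A = 2 → n = k →
      IsGreatest (grayCycleSizes A k n) 2) ∧
    (Fintype.card A = 2 → k + 1 ≤ n → Odd k →
      IsGreatest (grayCycleSizes A k n) (2 ^ n)) ∧
    (Fintype.card A = 2 → k + 1 ≤ n → Even k →
      IsGreatest (grayCycleSizes A k n) (2 ^ (n - 1))) := by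
  have hne (h : 2 ≤ Fintype.card A) : Nonempty A := Fintype.card_pos_iff.1 (by omega)
  refine ⟨fun h3 => ?_, fun h2 hnk => ?_, fun h2 hkn hko => ?_, fun h2 hkn hke => ?_⟩
  · have := hne (by omega)
    exact ⟨card_pow_mem_grayCycleSizes h3 hk hn, fun m => le_card_pow_of_mem_grayCycleSizes⟩
  · subst hnk
    exact ⟨two_mem_grayCycleSizes h2 hk le_rfl, fun m => le_two_of_mem_grayCycleSizes h2⟩
  · have := hne h2.ge
    exact ⟨two_pow_mem_grayCycleSizes h2 hk hko hkn,
      fun m hm => h2 ▸ le_card_pow_of_mem_grayCycleSizes hm⟩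
  · exact ⟨two_pow_pred_mem_grayCycleSizes h2 hk hke hkn,
      fun m => le_two_pow_pred_of_mem_grayCycleSizes h2 hk hke⟩

/-- For a finite alphabet `A` with `|A| ≥ 2`, `k ≥ 1`, and `n ≥ k`, the largest
cardinality `λ_{A,σ_k}(n)` of a set of words of length at most `n` over `A` admitting a
`σ_k`-Gray cycle is: `|A|^n` if `|A| ≥ 3`; `2` if `|A| = 2` and `n = k`; `2^n` if
`|A| = 2`, `n ≥ k + 1`, and `k` is odd; and `2^{n-1}` if `|A| = 2`, `n ≥ k + 1`, and
`k` is even. -/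
theorem statement18 (A : Type*) [Fintype A] [DecidableEq A]
    (hA : 2 ≤ Fintype.card A) (k n : ℕ) (hk : 1 ≤ k) (hn : k ≤ n) :
    (3 ≤ Fintype.card A →
      IsGreatest (grayCycleSizes A k n) (Fintype.card A ^ n)) ∧
    (Fintype.card A = 2 → n = k →
      IsGreatest (grayCycleSizes A k n) 2) ∧
    (Fintype.card A = 2 → k + 1 ≤ n → Odd k →
      IsGreatest (grayCycleSizes A k n) (2 ^ n)) ∧
    (Fintype.card A = 2 → k + 1 ≤ n → Even k →
      IsGreatest (grayCycleSizes A k n) (2 ^ (n - 1))) :=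
  statement18_general A k n hk hn
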